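/- Let (p*, ε*) be any minimizer of Problem 3. If client k satisfies 0 < p*ₖ < 1/N and client l satisfies p*ₗ = 0, then vₖ ≤ vₗ; that is, every excluded client has a virtual cost no smaller than that of the under-selected client. -/

import Mathlib

open Finset MeasureTheory Real

/-- Differential-privacy error term: sum over clients with nonzero selection
probability of `pₖ² / εₖ²`. -/
noncomputable def dpError {N : ℕ} (p ε : Fin N → ℝ) : ℝ :=
  ∑ k, if p k ≠ 0 then (p k) ^ 2 / (ε k) ^ 2 else 0

/-- Objective of Problem 3:
`G(p,ε) = η(‖p−pᵘ‖₁ + √(‖p−pᵘ‖₁² + Q·Σ_{pₖ≠0} pₖ²/εₖ²)) + Σₖ εₖ vₖ`,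
where `pᵘ = (1/N,…,1/N)`. -/
noncomputable def objG {N : ℕ} (η Q : ℝ) (v p ε : Fin N → ℝ) : ℝ :=
  η * ((∑ k, |p k - 1 / (N : ℝ)|) +
      Real.sqrt ((∑ k, |p k - 1 / (N : ℝ)|) ^ 2 + Q * dpError p ε)) +
    ∑ k, ε k * v k

/-- Feasible set of Problem 3: `Σₖ pₖ = 1`, `pₖ ≥ 0`, `εₖ ≥ 0`, and `εₖ > 0`
whenever `pₖ > 0`. -/
def Feasible {N : ℕ} (p ε : Fin N → ℝ) : Prop :=
  (∑ k, p k = 1) ∧ (∀ k, 0 ≤ p k) ∧ (∀ k, 0 ≤ ε k) ∧ (∀ k, 0 < p k → 0 < ε k)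

/-- `(p, ε)` is a minimizer of Problem 3 with virtual costs `v`. -/
def IsMinimizer {N : ℕ} (η Q : ℝ) (v p ε : Fin N → ℝ) : Prop :=
  Feasible p ε ∧ ∀ q e : Fin N → ℝ, Feasible q e → objG η Q v p ε ≤ objG η Q v q e


/-! Exchange argument. Swapping the roles of clients `k` and `l` in `p`, while giving the excluded
client the noise level `ε k` of `k` and switching off the noise of `k`, yields a feasible point
with the same `η`-term, because both `‖p - pᵘ‖₁` and `dpError` are permutation invariant and
`dpError` ignores `ε` off the support of `p`. Its cost term changes by
`ε k * (v l - v k) - ε l * v l`, and `v l ≥ 0` because `ε l` could otherwise be increased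
indefinitely. Minimality and `ε k > 0` then force `v k ≤ v l`. -/

variable {N : ℕ}

lemma dpError_comp_perm (σ : Equiv.Perm (Fin N)) (p ε : Fin N → ℝ) :
    dpError (p ∘ σ) (ε ∘ σ) = dpError p ε :=
  Equiv.sum_comp σ fun j => if p j ≠ 0 then p j ^ 2 / ε j ^ 2 else 0

lemma dpError_update_of_eq_zero (p ε : Fin N → ℝ) {l : Fin N} (hl : p l = 0) (t : ℝ) :
    dpError p (Function.update ε l t) = dpError p ε := by
  refine Finset.sum_congr rfl fun j _ => ?_
  by_cases hj : j = l
  · simp [hj, hl]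
  · rw [Function.update_of_ne hj]

lemma objG_comp_perm (η Q : ℝ) (v p ε : Fin N → ℝ) (σ : Equiv.Perm (Fin N)) :
    objG η Q v (p ∘ σ) (ε ∘ σ) = objG η Q (v ∘ σ.symm) p ε := by
  have hL1 : ∑ j, |(p ∘ σ) j - 1 / (N : ℝ)| = ∑ j, |p j - 1 / (N : ℝ)| :=
    Equiv.sum_comp σ fun j => |p j - 1 / (N : ℝ)|
  have hcost : ∑ j, (ε ∘ σ) j * v j = ∑ j, ε j * (v ∘ σ.symm) j := by
    simpa using Equiv.sum_comp σ fun j => ε j * v (σ.symm j)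
  rw [objG, objG, hL1, hcost, dpError_comp_perm]

lemma objG_comp_swap (η Q : ℝ) (v p ε : Fin N → ℝ) (k l : Fin N) :
    objG η Q (v ∘ Equiv.swap k l) p ε = objG η Q v p ε + (ε k - ε l) * (v l - v k) := by
  by_cases hkl : k = l
  · simp [hkl]
  have hcost : ∑ j, ε j * v (Equiv.swap k l j) - ∑ j, ε j * v j
      = (ε k - ε l) * (v l - v k) := by
    rw [← Finset.sum_sub_distrib, Fintype.sum_eq_add k l hkl fun j hj => by
      simp [Equiv.swap_apply_of_ne_of_ne hj.1 hj.2]]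
    simp only [Equiv.swap_apply_left, Equiv.swap_apply_right]
    ring
  simp only [objG, Function.comp_apply]
  linarith

lemma objG_update_of_eq_zero (η Q : ℝ) (v p ε : Fin N → ℝ) {l : Fin N} (hl : p l = 0) (t : ℝ) :
    objG η Q v p (Function.update ε l t) = objG η Q v p ε + (t - ε l) * v l := by
  have hcost : ∑ j, Function.update ε l t j * v j = ∑ j, ε j * v j + (t - ε l) * v l := by
    rw [← sub_eq_iff_eq_add', ← Finset.sum_sub_distrib, Fintype.sum_eq_single l fun j hj => by
      simp [hj]]
    simp only [Function.update_self]
    ring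
  rw [objG, objG, dpError_update_of_eq_zero p ε hl, hcost]
  ring

namespace Feasible

variable {p ε : Fin N → ℝ}

lemma comp_perm (h : Feasible p ε) (σ : Equiv.Perm (Fin N)) : Feasible (p ∘ σ) (ε ∘ σ) := by
  obtain ⟨hsum, hp, hε, hpε⟩ := h
  exact ⟨(Equiv.sum_comp σ p).trans hsum, fun j => hp (σ j), fun j => hε (σ j),
    fun j => hpε (σ j)⟩

lemma update_of_eq_zero (h : Feasible p ε) {l : Fin N} (hl : p l = 0) {t : ℝ} (ht : 0 ≤ t) :
    Feasible p (Function.update ε l t) := by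
  obtain ⟨hsum, hp, hε, hpε⟩ := h
  refine ⟨hsum, hp, fun j => ?_, fun j hj => ?_⟩ <;> by_cases hjl : j = l
  · simpa [hjl] using ht
  · simpa [hjl] using hε j
  · simp [hjl, hl] at hj
  · simpa [hjl] using hpε j hj

end Feasible

namespace IsMinimizer

variable {η Q : ℝ} {v p ε : Fin N → ℝ}

lemma cost_nonneg_of_eq_zero (h : IsMinimizer η Q v p ε) {l : Fin N} (hl : p l = 0) :
    0 ≤ v l := by
  have hle := h.2 p _ (h.1.update_of_eq_zero hl (by linarith [h.1.2.2.1 l] : 0 ≤ ε l + 1))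
  rw [objG_update_of_eq_zero η Q v p ε hl] at hle
  linarith

lemma cost_le_of_pos_of_eq_zero (h : IsMinimizer η Q v p ε) {k l : Fin N} (hk : 0 < p k)
    (hl : p l = 0) : v k ≤ v l := by
  have hkl : k ≠ l := by rintro rfl; exact hk.ne' hl
  have hle := h.2 _ _ ((h.1.update_of_eq_zero hl le_rfl).comp_perm (Equiv.swap k l))
  rw [objG_comp_perm, Equiv.symm_swap, objG_comp_swap, objG_update_of_eq_zero η Q v p ε hl,
    Function.update_of_ne hkl, Function.update_self] at hle
  have hεk : 0 < ε k := h.1.2.2.2 k hk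
  have hεl_cost : 0 ≤ ε l * v l := mul_nonneg (h.1.2.2.1 l) (h.cost_nonneg_of_eq_zero hl)
  have hdiff : ε k * (v k - v l) ≤ 0 := by linarith
  linarith [nonpos_of_mul_nonpos_right hdiff hεk]

end IsMinimizer

theorem under_selected_has_smaller_cost_than_excluded_general
    {N : ℕ} (v : Fin N → ℝ)
    (η Q : ℝ)
    (p ε : Fin N → ℝ) (hmin : IsMinimizer η Q v p ε)
    (k l : Fin N) (hk : 0 < p k) (hl : p l = 0) :
    v k ≤ v l :=
  hmin.cost_le_of_pos_of_eq_zero hk hl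

/-- At a minimizer of Problem 3, if client `k` is under-selected
(`0 < pₖ < 1/N`) and client `l` is excluded (`pₗ = 0`), then `vₖ ≤ vₗ`. -/
theorem under_selected_has_smaller_cost_than_excluded
    {N : ℕ} (hN : 2 ≤ N) (v : Fin N → ℝ)
    (hv_pos : ∀ k, 0 < v k) (hv_inj : Function.Injective v)
    (η Q : ℝ) (hη : 0 < η) (hQ : 0 < Q)
    (p ε : Fin N → ℝ) (hmin : IsMinimizer η Q v p ε)
    (k l : Fin N) (hk : 0 < p k) (hk' : p k < 1 / (N : ℝ)) (hl : p l = 0) :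
    v k ≤ v l :=
  under_selected_has_smaller_cost_than_excluded_general v η Q p ε hmin k l hk hl
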